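/- Let n ≥ 1 and let a : Fin n → ℝ be strictly decreasing with a i > 0 for all i. For λ : Fin n → ℝ satisfying the interlacing condition λ k < a k for all k, and a (k+1) < λ k for all k < n-1, define the point P(λ) ∈ EuclideanSpace ℝ (Fin n) by P(λ) k = Real.sqrt ((∏ i, (a k - λ i)) / (∏ i ∈ {i | i ≠ k}, (a k - a i))). Let λ⁰, λ¹ : Fin n → ℝ both satisfy the interlacing condition. For ε : Fin n → Bool write λ^ε for the function k ↦ λ^{ε k} k, and ¬ε for the pointwise negation of ε. Then the Euclidean length ‖P(λ^ε) - P(λ^{¬ε})‖ is the same for all ε : Fin n → Bool. (Theorem: all great diagonals of a parallelepiped bounded by confocal quadrics are equal.) -/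

import Mathlib

/-- The point of `ℝⁿ` with Jacobi (ellipsoidal) coordinates `λ : Fin n → ℝ` associated with
the strictly decreasing positive parameters `a : Fin n → ℝ`:
`P(λ) k = √( ∏ i (a k - λ i) / ∏_{i ≠ k} (a k - a i) )`. -/
noncomputable def jacobiPoint (n : ℕ) (a lam : Fin n → ℝ) : EuclideanSpace ℝ (Fin n) :=
  (WithLp.equiv 2 (Fin n → ℝ)).symm fun k =>
    Real.sqrt ((∏ i, (a k - lam i)) / (∏ i ∈ Finset.univ.filter (· ≠ k), (a k - a i)))

/-- The interlacing condition on Jacobi coordinates: `λ k < a k` for all `k` and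
`a (k+1) < λ k` whenever `k + 1 < n`. -/
def JacobiInterlaces (n : ℕ) (a lam : Fin n → ℝ) : Prop :=
  (∀ k, lam k < a k) ∧ ∀ (k : Fin n) (h : (k : ℕ) + 1 < n), a ⟨(k : ℕ) + 1, h⟩ < lam k

/-! For `x = P(μ)` and `y = P(ν)` we have `‖x - y‖² = ‖x‖² + ‖y‖² - 2⟪x, y⟫`. Applying the
divided-difference formula for the coefficient of `X^(n-1)` to `∏ i (X - μ i) - ∏ i (X - a i)`,
a polynomial of degree `< n`, gives `‖P(μ)‖² = ∑ i (a i - μ i)`, while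
`x k * y k = √(∏ i (a k - μ i) (a k - ν i)) / |∏_{i ≠ k} (a k - a i)|`. Both are symmetric in each
pair `(μ i, ν i)`, so the length of a diagonal only depends on the unordered pairs
`{λ⁰ i, λ¹ i}`, which are the same for all great diagonals. -/

open Finset Polynomial

theorem Lagrange.sum_prod_sub_div_prod_erase_sub {F ι : Type*} [Field F] [DecidableEq ι]
    {s : Finset ι} {a : ι → F} (ha : Set.InjOn a s) (μ : ι → F) :
    ∑ k ∈ s, (∏ i ∈ s, (a k - μ i)) / ∏ i ∈ s.erase k, (a k - a i) = ∑ i ∈ s, (a i - μ i) := by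
  rcases s.eq_empty_or_nonempty with rfl | hs
  · simp
  have hdeg : (nodal s μ - nodal s a).degree < s.card := by
    have := degree_sub_lt_left (p := nodal s μ) (q := nodal s a)
      (degree_nodal.trans degree_nodal.symm) nodal_ne_zero
      (nodal_monic.leadingCoeff.trans nodal_monic.leadingCoeff.symm)
    rwa [degree_nodal] at this
  calc ∑ k ∈ s, (∏ i ∈ s, (a k - μ i)) / ∏ i ∈ s.erase k, (a k - a i)
      = ∑ k ∈ s, (nodal s μ - nodal s a).eval (a k) / ∏ i ∈ s.erase k, (a k - a i) :=
        sum_congr rfl fun k hk => by rw [eval_sub, eval_nodal, eval_nodal_at_node hk, sub_zero]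
    _ = (nodal s μ - nodal s a).coeff (s.card - 1) := (coeff_eq_sum ha hdeg).symm
    _ = ∑ i ∈ s, (a i - μ i) := by
      rw [coeff_sub, nodal_eq, nodal_eq, prod_X_sub_C_coeff_card_pred _ _ hs.card_pos,
        prod_X_sub_C_coeff_card_pred _ _ hs.card_pos, sum_sub_distrib]
      ring

section Jacobi

variable {n : ℕ} {a lam μ ν μ' ν' : Fin n → ℝ}

theorem jacobiPoint_apply (k : Fin n) :
    jacobiPoint n a lam k =
      √((∏ i, (a k - lam i)) / ∏ i ∈ Finset.univ.filter (· ≠ k), (a k - a i)) := rfl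

theorem JacobiInterlaces.ite {lam0 lam1 : Fin n → ℝ} (h0 : JacobiInterlaces n a lam0)
    (h1 : JacobiInterlaces n a lam1) (ε : Fin n → Bool) :
    JacobiInterlaces n a fun k => if ε k then lam1 k else lam0 k :=
  ⟨fun k => by by_cases hε : ε k <;> simp [hε, h0.1 k, h1.1 k],
    fun k hk => by by_cases hε : ε k <;> simp [hε, h0.2 k hk, h1.2 k hk]⟩

theorem JacobiInterlaces.sub_div_sub_pos (hmono : StrictAnti a) (h : JacobiInterlaces n a lam)
    {i k : Fin n} (hik : i ≠ k) : 0 < (a k - lam i) / (a k - a i) := by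
  rcases hik.lt_or_gt with hlt | hgt
  · have hi : (i : ℕ) + 1 < n := by omega
    have : a k ≤ a ⟨i + 1, hi⟩ := hmono.antitone (Fin.le_def.2 hlt)
    exact div_pos_of_neg_of_neg (by linarith [h.2 i hi]) (by linarith [hmono hlt])
  · exact div_pos (by linarith [h.1 i, hmono hgt]) (by linarith [hmono hgt])

theorem JacobiInterlaces.radicand_nonneg (hmono : StrictAnti a) (h : JacobiInterlaces n a lam)
    (k : Fin n) : 0 ≤ (∏ i, (a k - lam i)) / ∏ i ∈ Finset.univ.filter (· ≠ k), (a k - a i) := by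
  rw [filter_ne', ← mul_prod_erase univ _ (mem_univ k), mul_div_assoc, ← prod_div_distrib]
  exact mul_nonneg (sub_pos.2 (h.1 k)).le <| prod_nonneg fun i hi =>
    (h.sub_div_sub_pos hmono (ne_of_mem_erase hi)).le

theorem norm_jacobiPoint_sq (hmono : StrictAnti a) (h : JacobiInterlaces n a lam) :
    ‖jacobiPoint n a lam‖ ^ 2 = ∑ i, (a i - lam i) := by
  simp_rw [EuclideanSpace.real_norm_sq_eq, jacobiPoint_apply,
    Real.sq_sqrt (h.radicand_nonneg hmono _), filter_ne']
  exact Lagrange.sum_prod_sub_div_prod_erase_sub hmono.injective.injOn lam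

theorem inner_jacobiPoint (hmono : StrictAnti a) (hμ : JacobiInterlaces n a μ) (ν : Fin n → ℝ) :
    inner ℝ (jacobiPoint n a μ) (jacobiPoint n a ν) =
      ∑ k, √((∏ i, (a k - μ i) * (a k - ν i)) /
        (∏ i ∈ Finset.univ.filter (· ≠ k), (a k - a i)) ^ 2) := by
  simp only [PiLp.inner_apply, jacobiPoint_apply]
  refine sum_congr rfl fun k _ => ?_
  rw [Real.inner_apply, ← Real.sqrt_mul (hμ.radicand_nonneg hmono k),
    div_mul_div_comm, prod_mul_distrib, sq]

theorem norm_jacobiPoint_sub_sq (hmono : StrictAnti a) (hμ : JacobiInterlaces n a μ)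
    (hν : JacobiInterlaces n a ν) :
    ‖jacobiPoint n a μ - jacobiPoint n a ν‖ ^ 2 =
      ∑ i, ((a i - μ i) + (a i - ν i)) - 2 * ∑ k, √((∏ i, (a k - μ i) * (a k - ν i)) /
        (∏ i ∈ Finset.univ.filter (· ≠ k), (a k - a i)) ^ 2) := by
  rw [norm_sub_sq_real, norm_jacobiPoint_sq hmono hμ, norm_jacobiPoint_sq hmono hν,
    inner_jacobiPoint hmono hμ, sum_add_distrib]
  ring

theorem norm_jacobiPoint_sub_eq_of_swap (hmono : StrictAnti a) (hμ : JacobiInterlaces n a μ)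
    (hν : JacobiInterlaces n a ν) (hμ' : JacobiInterlaces n a μ') (hν' : JacobiInterlaces n a ν')
    (hswap : ∀ i, (μ' i = μ i ∧ ν' i = ν i) ∨ (μ' i = ν i ∧ ν' i = μ i)) :
    ‖jacobiPoint n a μ' - jacobiPoint n a ν'‖ = ‖jacobiPoint n a μ - jacobiPoint n a ν‖ := by
  have hsum : ∀ i, (a i - μ' i) + (a i - ν' i) = (a i - μ i) + (a i - ν i) := fun i => by
    rcases hswap i with ⟨h, h'⟩ | ⟨h, h'⟩
    · rw [h, h']
    · rw [h, h', add_comm]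
  have hprod : ∀ x i, (x - μ' i) * (x - ν' i) = (x - μ i) * (x - ν i) := fun x i => by
    rcases hswap i with ⟨h, h'⟩ | ⟨h, h'⟩
    · rw [h, h']
    · rw [h, h', mul_comm]
  rw [← sq_eq_sq₀ (norm_nonneg _) (norm_nonneg _), norm_jacobiPoint_sub_sq hmono hμ' hν',
    norm_jacobiPoint_sub_sq hmono hμ hν]
  simp only [hsum, hprod]

end Jacobi

theorem ivory_great_diagonals_general (n : ℕ) (a : Fin n → ℝ)
    (hmono : StrictAnti a)
    (lam0 lam1 : Fin n → ℝ)
    (h0 : JacobiInterlaces n a lam0) (h1 : JacobiInterlaces n a lam1)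
    (sel : (Fin n → Bool) → Fin n → ℝ)
    (hsel : ∀ (ε : Fin n → Bool) (k : Fin n), sel ε k = if ε k then lam1 k else lam0 k)
    (ε₁ ε₂ : Fin n → Bool) :
    ‖jacobiPoint n a (sel ε₁) - jacobiPoint n a (sel fun k => !ε₁ k)‖ =
      ‖jacobiPoint n a (sel ε₂) - jacobiPoint n a (sel fun k => !ε₂ k)‖ := by
  have hsel_interlaces (ε : Fin n → Bool) : JacobiInterlaces n a (sel ε) := by
    rw [funext (hsel ε)]
    exact h0.ite h1 ε
  refine norm_jacobiPoint_sub_eq_of_swap hmono (hsel_interlaces _) (hsel_interlaces _)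
    (hsel_interlaces _) (hsel_interlaces _) fun i => ?_
  simp only [hsel]
  cases ε₁ i <;> cases ε₂ i <;> simp

/-- **Ivory's Lemma in higher dimensions**: all great diagonals of a parallelepiped bounded
by confocal quadrics (given in Jacobi coordinates by `λ i ∈ {λ⁰ i, λ¹ i}`) have equal
Euclidean lengths. -/
theorem ivory_great_diagonals (n : ℕ) (hn : 1 ≤ n) (a : Fin n → ℝ)
    (ha : ∀ i, 0 < a i) (hmono : StrictAnti a)
    (lam0 lam1 : Fin n → ℝ)
    (h0 : JacobiInterlaces n a lam0) (h1 : JacobiInterlaces n a lam1)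
    (sel : (Fin n → Bool) → Fin n → ℝ)
    (hsel : ∀ (ε : Fin n → Bool) (k : Fin n), sel ε k = if ε k then lam1 k else lam0 k)
    (ε₁ ε₂ : Fin n → Bool) :
    ‖jacobiPoint n a (sel ε₁) - jacobiPoint n a (sel fun k => !ε₁ k)‖ =
      ‖jacobiPoint n a (sel ε₂) - jacobiPoint n a (sel fun k => !ε₂ k)‖ :=
  ivory_great_diagonals_general n a hmono lam0 lam1 h0 h1 sel hsel ε₁ ε₂
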